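/- Fix an integer k ≥ 1. Then R_n^{(=k,0,0,0)}(x) = n! for all n ≤ k, and for every s ≥ 1, R_{k+s}^{(=k,0,0,0)}(x) = k! · Π_{i=1}^{s} (k + i − 1 + x). -/

import Mathlib

/-- Number of points in quadrant I relative to `(i, σ i)`:
indices `j > i` with `σ j > σ i`. -/
def quad1 {n : ℕ} (σ : Equiv.Perm (Fin n)) (i : Fin n) : ℕ :=
  (Finset.univ.filter (fun j => i < j ∧ σ i < σ j)).card

/-- `mmp^{(=k,0,0,0)}(σ)`: the number of indices `i` such that quadrant I
relative to `(i, σ i)` contains exactly `k` points. -/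
def mmpEqK {n : ℕ} (k : ℕ) (σ : Equiv.Perm (Fin n)) : ℕ :=
  (Finset.univ.filter (fun i => quad1 σ i = k)).card

/-- `R_n^{(=k,0,0,0)}(x) = Σ_{σ ∈ S_n} x^{mmp^{(=k,0,0,0)}(σ)}`. -/
noncomputable def R (k n : ℕ) : Polynomial ℤ :=
  ∑ σ : Equiv.Perm (Fin n), Polynomial.X ^ mmpEqK k σ

/-!
Every `σ ∈ S_{n+1}` arises exactly once by choosing its first value `p` and placing after it
a permutation `e ∈ S_n` of the remaining values, kept in the relative order of `e`. This
insertion does not change the quadrant-I counts of the later entries, while the first entry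
has exactly `n - p` larger entries to its right. Hence
`R_{n+1} = (Σ_{q=0}^{n} x^{[q = k]}) · R_n`, and the factor is `n + 1` for `n < k` and
`n + x` for `n ≥ k`.
-/

open Finset Polynomial

/-- The permutation of `Fin (n + 1)` with first value `p`, followed by the values other than
`p` arranged in the relative order given by `e`. -/
def consPerm {n : ℕ} (p : Fin (n + 1)) (e : Equiv.Perm (Fin n)) : Equiv.Perm (Fin (n + 1)) :=
  (finSuccEquiv n).trans ((Equiv.optionCongr e).trans (finSuccEquiv' p).symm)

section consPerm

variable {n : ℕ} (p : Fin (n + 1)) (e : Equiv.Perm (Fin n))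

@[simp]
lemma consPerm_zero : consPerm p e 0 = p := by
  simp [consPerm]

@[simp]
lemma consPerm_succ (i : Fin n) : consPerm p e i.succ = p.succAbove (e i) := by
  simp [consPerm]

lemma consPerm_bijective :
    Function.Bijective (fun pe : Fin (n + 1) × Equiv.Perm (Fin n) => consPerm pe.1 pe.2) := by
  rw [Fintype.bijective_iff_injective_and_card]
  refine ⟨?_, by simp [Fintype.card_perm, Nat.factorial_succ]⟩
  rintro ⟨p, e⟩ ⟨p', e'⟩ h
  have hp : p = p' := by simpa using congrArg (· 0) h
  subst hp
  have he : e = e' := Equiv.ext fun i => by simpa using congrArg (· i.succ) h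
  rw [he]

lemma quad1_consPerm_succ (i : Fin n) : quad1 (consPerm p e) i.succ = quad1 e i := by
  simp only [quad1, card_filter, Fin.sum_univ_succ, consPerm_succ, Fin.not_lt_zero,
    false_and, if_false, zero_add, Fin.succ_lt_succ_iff, Fin.succAbove_lt_succAbove_iff]

lemma card_filter_lt_succAbove : #{v : Fin n | p < p.succAbove v} = n - p := by
  have h := Fin.card_Ioi p
  rw [← filter_lt_eq_Ioi, card_filter, Fin.sum_univ_succAbove _ p, if_neg (lt_irrefl p),
    zero_add] at h
  rw [card_filter, h, Nat.add_sub_cancel]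

lemma quad1_consPerm_zero : quad1 (consPerm p e) 0 = n - p := by
  rw [← card_filter_lt_succAbove p, card_filter, ← Equiv.sum_comp e, quad1, card_filter,
    Fin.sum_univ_succ]
  simp [Fin.succ_pos]

lemma mmpEqK_consPerm (k : ℕ) :
    mmpEqK k (consPerm p e) = (if n - p = k then 1 else 0) + mmpEqK k e := by
  simp only [mmpEqK, card_filter, Fin.sum_univ_succ, quad1_consPerm_zero, quad1_consPerm_succ]

end consPerm

lemma sum_range_pow_ite_eq {A : Type*} [Ring A] (x : A) (n k : ℕ) :
    ∑ q ∈ range (n + 1), x ^ (if q = k then 1 else 0) =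
      if k ≤ n then (n : A) + x else n + 1 := by
  have hsplit (q : ℕ) : x ^ (if q = k then 1 else 0) = 1 + if q = k then x - 1 else 0 := by
    split_ifs <;> simp
  simp only [hsplit, sum_add_distrib, sum_ite_eq', mem_range, Nat.lt_succ_iff, sum_const,
    card_range, nsmul_one]
  split_ifs <;> push_cast <;> abel

lemma R_succ (k n : ℕ) :
    R k (n + 1) = (if k ≤ n then (n : ℤ[X]) + X else (n + 1 : ℤ[X])) * R k n := by
  rw [← sum_range_pow_ite_eq, ← Fin.sum_univ_eq_sum_range,
    ← Equiv.sum_comp Fin.revPerm, R, R, sum_mul,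
    ← Fintype.sum_bijective _ consPerm_bijective _ _ fun _ => rfl, Fintype.sum_prod_type]
  refine sum_congr rfl fun p _ => ?_
  simp only [mul_sum, mmpEqK_consPerm, pow_add, Fin.revPerm_apply, Fin.val_rev]
  congr! 4
  omega

lemma R_of_le {k n : ℕ} (h : n ≤ k) : R k n = (n.factorial : ℤ[X]) := by
  induction n with
  | zero => simp [R, mmpEqK]
  | succ n ih =>
    rw [R_succ, if_neg (by omega), ih (by omega), Nat.factorial_succ]
    push_cast
    ring

lemma R_self_add (k s : ℕ) :
    R k (k + s) = (k.factorial : ℤ[X]) * ∏ i ∈ Icc 1 s, (((k + i - 1 : ℕ) : ℤ[X]) + X) := by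
  induction s with
  | zero => simp [R_of_le]
  | succ s ih =>
    rw [← add_assoc, R_succ, if_pos (Nat.le_add_right k s), ih, prod_Icc_succ_top (by omega),
      show k + (s + 1) - 1 = k + s by omega]
    ring

theorem stmt_2_general (k : ℕ) :
    (∀ n, n ≤ k → R k n = (Nat.factorial n : Polynomial ℤ)) ∧
    (∀ s, 1 ≤ s → R k (k + s) =
      (Nat.factorial k : Polynomial ℤ) *
        ∏ i ∈ Finset.Icc 1 s,
          (((k + i - 1 : ℕ) : Polynomial ℤ) + Polynomial.X)) :=
  ⟨fun _ => R_of_le, fun s _ => R_self_add k s⟩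

theorem stmt_2 (k : ℕ) (hk : 1 ≤ k) :
    (∀ n, n ≤ k → R k n = (Nat.factorial n : Polynomial ℤ)) ∧
    (∀ s, 1 ≤ s → R k (k + s) =
      (Nat.factorial k : Polynomial ℤ) *
        ∏ i ∈ Finset.Icc 1 s,
          (((k + i - 1 : ℕ) : Polynomial ℤ) + Polynomial.X)) :=
  stmt_2_general k
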